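/- arXiv:2401.12236 — 3 statements merged into one kernel-verified Lean document; each statement's English description precedes it below -/
import Mathlib

section
/- For any vectors v, θ, x ∈ ℝ^p and any α ≥ 0: sup over δ ∈ ℝ^p with ‖δ‖₂ ≤ α of ((x + δ)ᵀv − xᵀθ)² equals α²‖v‖₂² + 2α‖v‖₂·|xᵀ(v − θ)| + (xᵀ(v − θ))². Consequently this supremum is bounded below by α²‖v‖₂² + (xᵀ(v − θ))² and bounded above by 2(α²‖v‖₂² + (xᵀ(v − θ))²). -/
/-!
After the substitution `y = x ⬝ᵥ (v - θ)` the objective is `(δ ⬝ᵥ v + y) ^ 2`. By Cauchy–Schwarz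
`|δ ⬝ᵥ v + y| ≤ α ‖v‖ + |y|` on the ball `‖δ‖ ≤ α`, with equality for `δ = ± α v / ‖v‖`, the sign
chosen as that of `y`. So the supremum is the maximum `(α ‖v‖ + |y|) ^ 2`, and the two bounds are
`a ^ 2 + b ^ 2 ≤ (a + b) ^ 2 ≤ 2 (a ^ 2 + b ^ 2)` for `a, b ≥ 0`.
-/

open Matrix

noncomputable section

def l2norm {p : ℕ} (v : Fin p → ℝ) : ℝ := Real.sqrt (∑ i, v i ^ 2)

theorem isGreatest_sq_inner_add {E : Type*} [NormedAddCommGroup E] [InnerProductSpace ℝ E]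
    {α : ℝ} (hα : 0 ≤ α) (v : E) (c : ℝ) :
    IsGreatest {r | ∃ δ : E, ‖δ‖ ≤ α ∧ r = (inner ℝ δ v + c) ^ 2} ((α * ‖v‖ + |c|) ^ 2) := by
  refine ⟨?_, ?_⟩
  · rcases eq_or_ne v 0 with rfl | hv
    · exact ⟨0, by simpa using hα, by simp⟩
    have hn : ‖v‖ ≠ 0 := norm_ne_zero_iff.mpr hv
    set s : ℝ := if 0 ≤ c then 1 else -1
    have hs_abs : |s| = 1 := by unfold s; split_ifs <;> simp
    have hsc : |c| = s * c := by
      unfold s; split_ifs with h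
      · simp [abs_of_nonneg h]
      · simp [abs_of_neg (not_le.mp h)]
    refine ⟨(s * α / ‖v‖) • v, le_of_eq ?_, ?_⟩
    · rw [norm_smul, Real.norm_eq_abs, abs_div, abs_mul, abs_norm, abs_of_nonneg hα,
        hs_abs, one_mul, div_mul_cancel₀ _ hn]
    · have hs : s ^ 2 = 1 := by rw [← sq_abs, hs_abs, one_pow]
      have hinner : s * α / ‖v‖ * ‖v‖ ^ 2 = s * α * ‖v‖ := by field_simp
      rw [real_inner_smul_left, real_inner_self_eq_norm_sq, hinner, hsc]
      linear_combination (c ^ 2 - α ^ 2 * ‖v‖ ^ 2) * hs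
  · rintro r ⟨δ, hδ, rfl⟩
    have : |inner ℝ δ v + c| ≤ α * ‖v‖ + |c| :=
      calc |inner ℝ δ v + c| ≤ |inner ℝ δ v| + |c| := abs_add_le _ _
        _ ≤ ‖δ‖ * ‖v‖ + |c| := by gcongr; exact abs_real_inner_le_norm δ v
        _ ≤ α * ‖v‖ + |c| := by gcongr
    simpa only [sq_abs] using pow_le_pow_left₀ (abs_nonneg _) this 2

lemma l2norm_eq_norm_toLp {p : ℕ} (v : Fin p → ℝ) :
    l2norm v = ‖(WithLp.toLp 2 v : EuclideanSpace ℝ (Fin p))‖ := by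
  simp [l2norm, EuclideanSpace.norm_eq]

lemma dotProduct_eq_inner_toLp {p : ℕ} (u v : Fin p → ℝ) :
    u ⬝ᵥ v = inner ℝ (WithLp.toLp 2 u : EuclideanSpace ℝ (Fin p)) (WithLp.toLp 2 v) := by
  rw [EuclideanSpace.inner_toLp_toLp, star_trivial, dotProduct_comm]

lemma add_dotProduct_sub_dotProduct {p : ℕ} (x δ v θ : Fin p → ℝ) :
    (x + δ) ⬝ᵥ v - x ⬝ᵥ θ = δ ⬝ᵥ v + x ⬝ᵥ (v - θ) := by
  rw [add_dotProduct, dotProduct_sub]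
  ring

theorem sSup_sq_add_dotProduct_sub_dotProduct {p : ℕ} {α : ℝ} (hα : 0 ≤ α) (v θ x : Fin p → ℝ) :
    sSup {r : ℝ | ∃ δ : Fin p → ℝ, l2norm δ ≤ α ∧ r = ((x + δ) ⬝ᵥ v - x ⬝ᵥ θ) ^ 2} =
      (α * l2norm v + |x ⬝ᵥ (v - θ)|) ^ 2 := by
  have hset : {r : ℝ | ∃ δ : Fin p → ℝ, l2norm δ ≤ α ∧ r = ((x + δ) ⬝ᵥ v - x ⬝ᵥ θ) ^ 2} =
      {r | ∃ δ : EuclideanSpace ℝ (Fin p), ‖δ‖ ≤ α ∧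
        r = (inner ℝ δ (WithLp.toLp 2 v) + x ⬝ᵥ (v - θ)) ^ 2} := by
    ext r
    constructor
    · rintro ⟨δ, hδ, rfl⟩
      refine ⟨WithLp.toLp 2 δ, by rwa [← l2norm_eq_norm_toLp], ?_⟩
      rw [add_dotProduct_sub_dotProduct, dotProduct_eq_inner_toLp δ]
    · rintro ⟨⟨δ⟩, hδ, rfl⟩
      refine ⟨δ, by rwa [l2norm_eq_norm_toLp], ?_⟩
      rw [add_dotProduct_sub_dotProduct, dotProduct_eq_inner_toLp δ]
  rw [hset, (isGreatest_sq_inner_add hα _ _).csSup_eq, l2norm_eq_norm_toLp]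

/-- Remark 3.1 / `remark:arisk`: for any `v, θ, x ∈ ℝ^p` and `α ≥ 0`,
the adversarial supremum `sup_{‖δ‖₂ ≤ α} ((x+δ)ᵀv − xᵀθ)²` equals
`α²‖v‖₂² + 2α‖v‖₂|xᵀ(v−θ)| + (xᵀ(v−θ))²`, and is consequently bounded below by
`α²‖v‖₂² + (xᵀ(v−θ))²` and above by `2(α²‖v‖₂² + (xᵀ(v−θ))²)`. -/
theorem statement8 (p : ℕ) (v θ x : Fin p → ℝ) (α : ℝ) (hα : 0 ≤ α) :
    sSup {r : ℝ | ∃ δ : Fin p → ℝ, l2norm δ ≤ α ∧ r = ((x + δ) ⬝ᵥ v - x ⬝ᵥ θ) ^ 2} =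
        α ^ 2 * l2norm v ^ 2 + 2 * α * l2norm v * |x ⬝ᵥ (v - θ)| + (x ⬝ᵥ (v - θ)) ^ 2 ∧
      α ^ 2 * l2norm v ^ 2 + (x ⬝ᵥ (v - θ)) ^ 2 ≤
        sSup {r : ℝ | ∃ δ : Fin p → ℝ, l2norm δ ≤ α ∧ r = ((x + δ) ⬝ᵥ v - x ⬝ᵥ θ) ^ 2} ∧
      sSup {r : ℝ | ∃ δ : Fin p → ℝ, l2norm δ ≤ α ∧ r = ((x + δ) ⬝ᵥ v - x ⬝ᵥ θ) ^ 2} ≤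
        2 * (α ^ 2 * l2norm v ^ 2 + (x ⬝ᵥ (v - θ)) ^ 2) := by
  rw [sSup_sq_add_dotProduct_sub_dotProduct hα]
  set a := α * l2norm v
  set b := |x ⬝ᵥ (v - θ)|
  have ha : α ^ 2 * l2norm v ^ 2 = a ^ 2 := (mul_pow _ _ _).symm
  have hb : (x ⬝ᵥ (v - θ)) ^ 2 = b ^ 2 := (sq_abs _).symm
  have hab : 0 ≤ a * b := mul_nonneg (mul_nonneg hα (Real.sqrt_nonneg _)) (abs_nonneg _)
  rw [ha, hb]
  refine ⟨by ring, by linarith [add_sq a b], add_sq_le⟩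

end
end

section
/- (Woodbury decomposition of the variance trace terms.) Let n, p ≥ 1, λ > 0, let Σ = Σ_{i=1}^p λᵢvᵢvᵢᵀ be a p×p symmetric positive-definite matrix with λᵢ > 0 and {v₁,…,v_p} an orthonormal basis of ℝ^p, let X ∈ ℝ^{n×p}, and set zᵢ = Xvᵢ/√λᵢ ∈ ℝⁿ and A_{−i} = XXᵀ − λᵢzᵢzᵢᵀ. Then: (i) trace{XΣXᵀ(XXᵀ + nλI)^{-2}} = Σ_{i=1}^p [λᵢ² zᵢᵀ(A_{−i} + nλI)^{-2}zᵢ] / [1 + λᵢ zᵢᵀ(A_{−i} + nλI)^{-1}zᵢ]²; and (ii) trace{XXᵀ(XXᵀ + nλI)^{-2}} = Σ_{i=1}^p [λᵢ zᵢᵀ(A_{−i} + nλI)^{-2}zᵢ] / [1 + λᵢ zᵢᵀ(A_{−i} + nλI)^{-1}zᵢ]². -/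
/-!
Orthonormality of the `vᵢ` gives `X Xᵀ = Σᵢ λᵢ zᵢ zᵢᵀ` and `X Σ Xᵀ = Σᵢ λᵢ² zᵢ zᵢᵀ`, so both traces
are weighted sums of the quadratic forms `zᵢᵀ M⁻² zᵢ` with `M = X Xᵀ + nλI`. Splitting
`M = B + λᵢ zᵢ zᵢᵀ` with `B = A₋ᵢ + nλI`, Sherman–Morrison gives
`M⁻¹ zᵢ = B⁻¹ zᵢ / (1 + λᵢ zᵢᵀ B⁻¹ zᵢ)`, and by symmetry `zᵢᵀ M⁻² zᵢ = ‖M⁻¹ zᵢ‖²`.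
-/

open Matrix

noncomputable section

variable {n p : ℕ}

/-- `zᵢ = X vᵢ / √λᵢ`. -/
def zvec (lam : Fin p → ℝ) (v : Fin p → Fin p → ℝ) (X : Matrix (Fin n) (Fin p) ℝ)
    (i : Fin p) : Fin n → ℝ :=
  (Real.sqrt (lam i))⁻¹ • X.mulVec (v i)

/-- `A₋ᵢ = X Xᵀ − λᵢ zᵢ zᵢᵀ`. -/
def Ami (lam : Fin p → ℝ) (v : Fin p → Fin p → ℝ) (X : Matrix (Fin n) (Fin p) ℝ)
    (i : Fin p) : Matrix (Fin n) (Fin n) ℝ :=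
  X * Xᵀ - lam i • vecMulVec (zvec lam v X i) (zvec lam v X i)

/-- `B ↦ B + n λ I`. -/
def addReg (lamreg : ℝ) (B : Matrix (Fin n) (Fin n) ℝ) : Matrix (Fin n) (Fin n) ℝ :=
  B + ((n : ℝ) * lamreg) • (1 : Matrix (Fin n) (Fin n) ℝ)

namespace Matrix

section Field

variable {ι K : Type*} [Fintype ι] [DecidableEq ι] [Field K]

theorem inv_add_smul_vecMulVec_mulVec {B : Matrix ι ι K} (hB : IsUnit B.det) {c : K}
    {u w : ι → K} (hM : IsUnit (B + c • vecMulVec u w).det) :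
    (B + c • vecMulVec u w)⁻¹ *ᵥ u = (1 + c * (w ⬝ᵥ B⁻¹ *ᵥ u))⁻¹ • B⁻¹ *ᵥ u := by
  set d := 1 + c * (w ⬝ᵥ B⁻¹ *ᵥ u)
  have hMB : (B + c • vecMulVec u w) *ᵥ (B⁻¹ *ᵥ u) = d • u := by
    rw [add_mulVec, mulVec_mulVec, mul_nonsing_inv _ hB, one_mulVec, smul_mulVec,
      vecMulVec_mulVec, op_smul_eq_smul, smul_smul, add_smul, one_smul]
  have hBinv : B⁻¹ *ᵥ u = d • (B + c • vecMulVec u w)⁻¹ *ᵥ u := by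
    rw [← mulVec_smul, ← hMB, mulVec_mulVec, nonsing_inv_mul _ hM, one_mulVec]
  by_cases hd : d = 0
  -- then `B⁻¹ u = 0`, so `u = 0` and both sides vanish (the junk value `0⁻¹ = 0` is harmless)
  · have hu : u = 0 := by
      rw [← one_mulVec u, ← mul_nonsing_inv _ hB, ← mulVec_mulVec, hBinv, hd, zero_smul,
        mulVec_zero]
    simp [hu]
  · rw [hBinv, smul_smul, inv_mul_cancel₀ hd, one_smul]

omit [DecidableEq ι] in
theorem IsSymm.dotProduct_mul_self_mulVec {S : Matrix ι ι K} (hS : S.IsSymm) (z : ι → K) :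
    z ⬝ᵥ (S * S) *ᵥ z = (S *ᵥ z) ⬝ᵥ (S *ᵥ z) := by
  rw [← mulVec_mulVec, dotProduct_mulVec, ← mulVec_transpose, hS.eq]

theorem dotProduct_inv_mul_inv_add_smul_vecMulVec_self_mulVec {B : Matrix ι ι K}
    (hBs : B.IsSymm) (hB : IsUnit B.det) {c : K} {z : ι → K}
    (hM : IsUnit (B + c • vecMulVec z z).det) :
    z ⬝ᵥ ((B + c • vecMulVec z z)⁻¹ * (B + c • vecMulVec z z)⁻¹) *ᵥ z =
      (z ⬝ᵥ (B⁻¹ * B⁻¹) *ᵥ z) / (1 + c * (z ⬝ᵥ B⁻¹ *ᵥ z)) ^ 2 := by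
  have hMs : (B + c • vecMulVec z z).IsSymm :=
    hBs.add (IsSymm.smul (transpose_vecMulVec z z) c)
  rw [hMs.inv.dotProduct_mul_self_mulVec, hBs.inv.dotProduct_mul_self_mulVec,
    inv_add_smul_vecMulVec_mulVec hB hM, smul_dotProduct, dotProduct_smul, smul_eq_mul,
    smul_eq_mul, div_eq_mul_inv, ← inv_pow]
  ring

end Field

section CommRing

variable {ι κ R : Type*} [Fintype ι] [CommRing R]

theorem mul_vecMulVec_mul_transpose {m : Type*} (X : Matrix m ι R) (a b : ι → R) :
    X * vecMulVec a b * Xᵀ = vecMulVec (X *ᵥ a) (X *ᵥ b) := by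
  rw [mul_vecMulVec, vecMulVec_mul, vecMul_transpose]

theorem trace_vecMulVec_mul (a b : ι → R) (Q : Matrix ι ι R) :
    trace (vecMulVec a b * Q) = b ⬝ᵥ Q *ᵥ a := by
  rw [trace_mul_comm, mul_vecMulVec, trace_vecMulVec, dotProduct_comm]

theorem trace_sum_smul_vecMulVec_self_mul [Fintype κ] (c : κ → R) (u : κ → ι → R)
    (Q : Matrix ι ι R) :
    trace ((∑ k, c k • vecMulVec (u k) (u k)) * Q) = ∑ k, c k * (u k ⬝ᵥ Q *ᵥ u k) := by
  rw [Finset.sum_mul, trace_sum]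
  refine Finset.sum_congr rfl fun k _ => ?_
  rw [smul_mul_assoc, trace_smul, trace_vecMulVec_mul, smul_eq_mul]

theorem sum_vecMulVec_self_eq_one [DecidableEq ι] {v : ι → ι → R}
    (hv : ∀ i j, v i ⬝ᵥ v j = if i = j then 1 else 0) :
    ∑ i, vecMulVec (v i) (v i) = 1 := by
  have hrows : of v * (of v)ᵀ = 1 := by
    ext i j
    simpa [mul_apply, dotProduct, one_apply] using hv i j
  have hcols : (of v)ᵀ * of v = 1 := mul_eq_one_comm.mp hrows
  ext j k
  simpa [sum_apply, mul_apply, vecMulVec_apply] using congrFun (congrFun hcols j) k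

theorem mul_transpose_eq_sum_vecMulVec_mulVec {m : Type*} [DecidableEq ι] {v : ι → ι → R}
    (hv : ∀ i j, v i ⬝ᵥ v j = if i = j then 1 else 0) (X : Matrix m ι R) :
    X * Xᵀ = ∑ i, vecMulVec (X *ᵥ v i) (X *ᵥ v i) := by
  calc X * Xᵀ = X * (∑ i, vecMulVec (v i) (v i)) * Xᵀ := by
        rw [sum_vecMulVec_self_eq_one hv, Matrix.mul_one]
    _ = ∑ i, vecMulVec (X *ᵥ v i) (X *ᵥ v i) := by
        simp_rw [Matrix.mul_sum, Matrix.sum_mul, mul_vecMulVec_mul_transpose]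

end CommRing

end Matrix

variable {lam : Fin p → ℝ} {v : Fin p → Fin p → ℝ} {X : Matrix (Fin n) (Fin p) ℝ}

theorem smul_vecMulVec_zvec {i : Fin p} (hi : 0 < lam i) :
    lam i • vecMulVec (zvec lam v X i) (zvec lam v X i) = vecMulVec (X *ᵥ v i) (X *ᵥ v i) := by
  have hscalar : lam i * (√(lam i))⁻¹ * (√(lam i))⁻¹ = 1 := by
    rw [mul_assoc, ← mul_inv, Real.mul_self_sqrt hi.le, mul_inv_cancel₀ hi.ne']
  rw [zvec, smul_vecMulVec, vecMulVec_smul, smul_smul, smul_smul, hscalar, one_smul]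

theorem mul_transpose_eq_sum_zvec (hlam : ∀ i, 0 < lam i)
    (hv : ∀ i j, v i ⬝ᵥ v j = if i = j then (1 : ℝ) else 0) :
    X * Xᵀ = ∑ i, lam i • vecMulVec (zvec lam v X i) (zvec lam v X i) := by
  simp_rw [smul_vecMulVec_zvec (hlam _), mul_transpose_eq_sum_vecMulVec_mulVec hv]

theorem mul_covariance_mul_transpose_eq_sum_zvec (hlam : ∀ i, 0 < lam i) :
    X * (∑ i, lam i • vecMulVec (v i) (v i)) * Xᵀ =
      ∑ i, lam i ^ 2 • vecMulVec (zvec lam v X i) (zvec lam v X i) := by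
  rw [Matrix.mul_sum, Matrix.sum_mul]
  refine Finset.sum_congr rfl fun i _ => ?_
  rw [Matrix.mul_smul, Matrix.smul_mul, mul_vecMulVec_mul_transpose,
    ← smul_vecMulVec_zvec (hlam i), smul_smul, sq]

theorem Ami_posSemidef (hlam : ∀ i, 0 < lam i)
    (hv : ∀ i j, v i ⬝ᵥ v j = if i = j then (1 : ℝ) else 0) (i : Fin p) :
    (Ami lam v X i).PosSemidef := by
  rw [Ami, smul_vecMulVec_zvec (hlam i), mul_transpose_eq_sum_vecMulVec_mulVec hv,
    ← Finset.sum_erase_eq_sub (Finset.mem_univ i)]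
  exact posSemidef_sum _ fun j _ => by
    simpa using posSemidef_vecMulVec_self_star (X *ᵥ v j)

theorem addReg_posDef {lamreg : ℝ} (hlamreg : 0 < lamreg) {A : Matrix (Fin n) (Fin n) ℝ}
    (hA : A.PosSemidef) : (addReg lamreg A).PosDef := by
  rcases n.eq_zero_or_pos with rfl | hn
  · rw [Subsingleton.elim (addReg lamreg A) 1]
    exact PosDef.one
  · exact PosDef.posSemidef_add hA (PosDef.one.smul (by positivity))

theorem addReg_mul_transpose (lamreg : ℝ) (i : Fin p) :
    addReg lamreg (X * Xᵀ) =
      addReg lamreg (Ami lam v X i) + lam i • vecMulVec (zvec lam v X i) (zvec lam v X i) := by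
  rw [addReg, addReg, Ami]
  abel

theorem zvec_dotProduct_addReg_inv_sq_mulVec {lamreg : ℝ} (hlamreg : 0 < lamreg)
    (hlam : ∀ i, 0 < lam i) (hv : ∀ i j, v i ⬝ᵥ v j = if i = j then (1 : ℝ) else 0)
    (i : Fin p) :
    zvec lam v X i ⬝ᵥ
        ((addReg lamreg (X * Xᵀ))⁻¹ * (addReg lamreg (X * Xᵀ))⁻¹) *ᵥ zvec lam v X i =
      (zvec lam v X i ⬝ᵥ
          ((addReg lamreg (Ami lam v X i))⁻¹ * (addReg lamreg (Ami lam v X i))⁻¹) *ᵥ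
            zvec lam v X i) /
        (1 + lam i * (zvec lam v X i ⬝ᵥ (addReg lamreg (Ami lam v X i))⁻¹ *ᵥ zvec lam v X i))
          ^ 2 := by
  have hB := addReg_posDef hlamreg (Ami_posSemidef (X := X) hlam hv i)
  have hM : (addReg lamreg (X * Xᵀ)).PosDef := by
    rw [addReg_mul_transpose lamreg i, smul_vecMulVec_zvec (hlam i)]
    exact hB.add_posSemidef (by simpa using posSemidef_vecMulVec_self_star (X *ᵥ v i))
  rw [addReg_mul_transpose (lam := lam) (v := v) lamreg i] at hM ⊢
  exact dotProduct_inv_mul_inv_add_smul_vecMulVec_self_mulVec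
    (isHermitian_iff_isSymm.mp hB.isHermitian) ((isUnit_iff_isUnit_det _).mp hB.isUnit)
    ((isUnit_iff_isUnit_det _).mp hM.isUnit)

/-- Woodbury decomposition of the variance trace terms, Eq. (17):
with `Σ = Σᵢ λᵢ vᵢ vᵢᵀ`, `zᵢ = X vᵢ/√λᵢ` and `A₋ᵢ = X Xᵀ − λᵢ zᵢ zᵢᵀ`,
(i) `tr{X Σ Xᵀ (X Xᵀ + nλI)⁻²} = Σᵢ λᵢ² zᵢᵀ(A₋ᵢ+nλI)⁻² zᵢ / (1 + λᵢ zᵢᵀ(A₋ᵢ+nλI)⁻¹ zᵢ)²`, and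
(ii) `tr{X Xᵀ (X Xᵀ + nλI)⁻²} = Σᵢ λᵢ zᵢᵀ(A₋ᵢ+nλI)⁻² zᵢ / (1 + λᵢ zᵢᵀ(A₋ᵢ+nλI)⁻¹ zᵢ)²`. -/
theorem statement16 (lamreg : ℝ) (hlam : 0 < lamreg)
    (lam : Fin p → ℝ) (hlampos : ∀ i, 0 < lam i)
    (v : Fin p → Fin p → ℝ)
    (hv : ∀ i j : Fin p, v i ⬝ᵥ v j = if i = j then (1 : ℝ) else 0)
    (X : Matrix (Fin n) (Fin p) ℝ) :
    Matrix.trace (X * (∑ i, lam i • vecMulVec (v i) (v i)) * Xᵀ *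
        ((addReg lamreg (X * Xᵀ))⁻¹ * (addReg lamreg (X * Xᵀ))⁻¹)) =
      (∑ i : Fin p,
        lam i ^ 2 * (zvec lam v X i ⬝ᵥ
            ((addReg lamreg (Ami lam v X i))⁻¹ *
              (addReg lamreg (Ami lam v X i))⁻¹).mulVec (zvec lam v X i)) /
          (1 + lam i * (zvec lam v X i ⬝ᵥ
            (addReg lamreg (Ami lam v X i))⁻¹.mulVec (zvec lam v X i))) ^ 2) ∧
    Matrix.trace (X * Xᵀ *
        ((addReg lamreg (X * Xᵀ))⁻¹ * (addReg lamreg (X * Xᵀ))⁻¹)) =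
      (∑ i : Fin p,
        lam i * (zvec lam v X i ⬝ᵥ
            ((addReg lamreg (Ami lam v X i))⁻¹ *
              (addReg lamreg (Ami lam v X i))⁻¹).mulVec (zvec lam v X i)) /
          (1 + lam i * (zvec lam v X i ⬝ᵥ
            (addReg lamreg (Ami lam v X i))⁻¹.mulVec (zvec lam v X i))) ^ 2) := by
  have hkey := zvec_dotProduct_addReg_inv_sq_mulVec (X := X) hlam hlampos hv
  constructor
  · rw [mul_covariance_mul_transpose_eq_sum_zvec hlampos, trace_sum_smul_vecMulVec_self_mul]
    simp_rw [hkey, mul_div_assoc]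
  · nth_rw 1 [mul_transpose_eq_sum_zvec hlampos hv]
    rw [trace_sum_smul_vecMulVec_self_mul]
    simp_rw [hkey, mul_div_assoc]

end
end

section
/- (Lower bound for the bias part of the squared parameter norm under random signs.) Let n, p ≥ 1, λ > 0, Σ = VΛVᵀ a p×p symmetric positive-definite matrix with eigenvalues λᵢ > 0 and orthonormal eigenvector matrix V = [v₁,…,v_p], X ∈ ℝ^{n×p}, zᵢ = Xvᵢ/√λᵢ, A_{−i} = XXᵀ − λᵢzᵢzᵢᵀ, and M = (XXᵀ + nλI)^{-1}. Let t ∈ ℝ^p be fixed, let s be a random vector of independent uniform ±1 signs, and set θ = V(s ⊙ t). Then E_s[θᵀXᵀM·XXᵀ·MXθ] = Σ_{i=1}^p tᵢ²λᵢ·zᵢᵀM(XXᵀ)Mzᵢ ≥ Σ_{i=1}^p tᵢ²λᵢ²(zᵢᵀMzᵢ)² = Σ_{i=1}^p tᵢ²·[λᵢzᵢᵀ(A_{−i} + nλI)^{-1}zᵢ / (1 + λᵢzᵢᵀ(A_{−i} + nλI)^{-1}zᵢ)]². -/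
/-! Averaging over the signs kills the cross terms, leaving `Σᵢ tᵢ² (Xvᵢ)ᵀ C (Xvᵢ)`.
Orthonormality of `V` gives `XXᵀ = Σⱼ λⱼ zⱼzⱼᵀ`, so the quadratic form of `XXᵀ` dominates each
of its summands: with `w = Mzᵢ` this is the inequality, and it also makes `A₋ᵢ` positive
semidefinite, hence `A₋ᵢ + nλI` invertible. The last equality is Sherman–Morrison for the rank-one
update `XXᵀ + nλI = (A₋ᵢ + nλI) + λᵢzᵢzᵢᵀ`. -/

open Matrix

noncomputable section

variable {n p : ℕ}

/-- a ±1 sign from a boolean -/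
def sgn (b : Bool) : ℝ := if b then 1 else -1

theorem sum_sgn_mul_sgn {ι : Type*} [Fintype ι] [DecidableEq ι] (j k : ι) :
    ∑ s : ι → Bool, sgn (s j) * sgn (s k) = if j = k then 2 ^ Fintype.card ι else 0 := by
  split_ifs with hjk
  · subst hjk
    have hsq (b : Bool) : sgn b * sgn b = 1 := by cases b <;> norm_num [sgn]
    simp [hsq]
  · -- flipping the `j`-th sign negates every term
    let flip : Equiv.Perm (ι → Bool) :=
      Function.Involutive.toPerm (fun s => Function.update s j (!s j)) fun s => by simp
    have hneg : ∑ s : ι → Bool, sgn (s j) * sgn (s k) =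
        -∑ s : ι → Bool, sgn (s j) * sgn (s k) := by
      rw [← Finset.sum_neg_distrib]
      refine Fintype.sum_equiv flip _ _ fun s => ?_
      have hj : flip s j = !s j := Function.update_self _ _ _
      have hk : flip s k = s k := Function.update_of_ne (Ne.symm hjk) _ _
      rw [hj, hk]
      cases s j <;> cases s k <;> norm_num [sgn]
    linarith

theorem sum_sgn_dotProduct_mulVec {ι : Type*} [Fintype ι] [DecidableEq ι]
    (B : Matrix ι ι ℝ) (u : ι → ℝ) :
    ∑ s : ι → Bool, (fun j => sgn (s j) * u j) ⬝ᵥ B *ᵥ (fun j => sgn (s j) * u j)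
      = 2 ^ Fintype.card ι * ∑ i, u i ^ 2 * B i i := by
  calc _ = ∑ j, ∑ k, (∑ s : ι → Bool, sgn (s j) * sgn (s k)) * (u j * u k * B j k) := by
        simp only [dotProduct, mulVec, Finset.mul_sum, Finset.sum_mul]
        rw [Finset.sum_comm]
        refine Finset.sum_congr rfl fun j _ => ?_
        rw [Finset.sum_comm]
        exact Finset.sum_congr rfl fun k _ => Finset.sum_congr rfl fun s _ => by ring
    _ = _ := by
        simp only [sum_sgn_mul_sgn, ite_mul, zero_mul, Finset.sum_ite_eq, Finset.mem_univ,
          if_true, Finset.mul_sum]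
        exact Finset.sum_congr rfl fun i _ => by ring

theorem mulVec_dotProduct_mulVec_eq_transpose_mul_mul {m k R : Type*} [Fintype m]
    [Fintype k] [CommSemiring R] (Y : Matrix m k R) (C : Matrix m m R) (a : k → R) :
    Y *ᵥ a ⬝ᵥ C *ᵥ (Y *ᵥ a) = a ⬝ᵥ (Yᵀ * C * Y) *ᵥ a := by
  rw [← mulVec_mulVec, ← mulVec_mulVec, dotProduct_mulVec a, vecMul_transpose]

theorem dotProduct_mul_mul_mulVec_of_isSymm {m R : Type*} [Fintype m] [CommSemiring R]
    {M : Matrix m m R} (hM : M.IsSymm) (A : Matrix m m R) (z : m → R) :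
    z ⬝ᵥ (M * A * M) *ᵥ z = M *ᵥ z ⬝ᵥ A *ᵥ (M *ᵥ z) := by
  rw [mulVec_dotProduct_mulVec_eq_transpose_mul_mul, hM.eq]

/-- Sherman–Morrison, seen through the scalar `vᵀ(B + uvᵀ)⁻¹u`. -/
theorem dotProduct_inv_add_vecMulVec_mulVec {K m : Type*} [Field K] [Fintype m] [DecidableEq m]
    {B : Matrix m m K} {u v : m → K} (hB : IsUnit B) (hBuv : IsUnit (B + vecMulVec u v)) :
    v ⬝ᵥ (B + vecMulVec u v)⁻¹ *ᵥ u = (v ⬝ᵥ B⁻¹ *ᵥ u) / (1 + v ⬝ᵥ B⁻¹ *ᵥ u) := by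
  set w := (B + vecMulVec u v)⁻¹ *ᵥ u
  set c := v ⬝ᵥ B⁻¹ *ᵥ u
  have hBw : B *ᵥ w + (v ⬝ᵥ w) • u = u := by
    have h := congrArg (· *ᵥ u) ((B + vecMulVec u v).mul_nonsing_inv
      ((isUnit_iff_isUnit_det _).mp hBuv))
    simp only [← mulVec_mulVec, one_mulVec, add_mulVec, vecMulVec_mulVec] at h
    simpa [w] using h
  have hw : w = B⁻¹ *ᵥ u - (v ⬝ᵥ w) • B⁻¹ *ᵥ u := by
    rw [eq_sub_iff_add_eq, ← mulVec_smul]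
    conv_rhs => rw [← hBw]
    rw [mulVec_add, mulVec_mulVec, B.nonsing_inv_mul ((isUnit_iff_isUnit_det _).mp hB),
      one_mulVec]
  have key : (v ⬝ᵥ w) * (1 + c) = c := by
    have := congrArg (v ⬝ᵥ ·) hw
    simp only [dotProduct_sub, dotProduct_smul, smul_eq_mul] at this
    linear_combination this
  -- by `key`, `1 + c = 0` would force `c = 0`
  have h1c : 1 + c ≠ 0 := by
    intro h
    have hc : c = 0 := by rw [← key, h, mul_zero]
    simp [hc] at h
  rw [eq_div_iff h1c, key]

theorem single_one_dotProduct_mulVec_single_one {m R : Type*} [Fintype m] [DecidableEq m]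
    [NonAssocSemiring R] (M : Matrix m m R) (i : m) :
    Pi.single i 1 ⬝ᵥ M *ᵥ Pi.single i 1 = M i i := by
  rw [single_one_dotProduct, mulVec_single_one, col_apply]

theorem isSymm_mul_transpose {m k R : Type*} [Fintype k] [CommSemiring R] (A : Matrix m k R) :
    (A * Aᵀ).IsSymm := by
  rw [IsSymm, transpose_mul, transpose_transpose]

theorem isSymm_addReg {A : Matrix (Fin n) (Fin n) ℝ} (hA : A.IsSymm) (lamreg : ℝ) :
    (addReg lamreg A).IsSymm :=
  hA.add (isSymm_one.smul _)

theorem isUnit_addReg {A : Matrix (Fin n) (Fin n) ℝ} (hA : A.PosSemidef) {lamreg : ℝ}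
    (hlam : 0 < lamreg) : IsUnit (addReg lamreg A) := by
  rcases Nat.eq_zero_or_pos n with rfl | hn
  · exact isUnit_of_subsingleton _
  · exact (PosDef.posSemidef_add hA (PosDef.one.smul (by positivity))).isUnit

section Spectral

variable {lam : Fin p → ℝ} {X : Matrix (Fin n) (Fin p) ℝ}

theorem sqrt_smul_zvec {i : Fin p} (hlam : 0 < lam i) (v : Fin p → Fin p → ℝ) :
    √(lam i) • zvec lam v X i = X *ᵥ v i := by
  rw [zvec, smul_smul, mul_inv_cancel₀ (Real.sqrt_pos.mpr hlam).ne', one_smul]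

theorem mulVec_dotProduct_mulVec_eq_mul_zvec {i : Fin p} (hlam : 0 < lam i)
    (v : Fin p → Fin p → ℝ) (C : Matrix (Fin n) (Fin n) ℝ) :
    X *ᵥ v i ⬝ᵥ C *ᵥ (X *ᵥ v i) = lam i * (zvec lam v X i ⬝ᵥ C *ᵥ zvec lam v X i) := by
  rw [← sqrt_smul_zvec hlam, mulVec_smul, smul_dotProduct, dotProduct_smul, smul_eq_mul,
    smul_eq_mul, ← mul_assoc, Real.mul_self_sqrt hlam.le]

theorem inv_two_pow_mul_sum_sgn_quadForm (hlampos : ∀ i, 0 < lam i)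
    (V : Matrix (Fin p) (Fin p) ℝ) (t : Fin p → ℝ) (C : Matrix (Fin n) (Fin n) ℝ) :
    ((2 : ℝ) ^ p)⁻¹ * ∑ s : Fin p → Bool,
        X *ᵥ (V *ᵥ fun j => sgn (s j) * t j) ⬝ᵥ C *ᵥ (X *ᵥ (V *ᵥ fun j => sgn (s j) * t j)) =
      ∑ i, t i ^ 2 * lam i *
        (zvec lam (fun i j => V j i) X i ⬝ᵥ C *ᵥ zvec lam (fun i j => V j i) X i) := by
  have hdiag (i : Fin p) : (Vᵀ * (Xᵀ * C * X) * V) i i =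
      lam i * (zvec lam (fun i j => V j i) X i ⬝ᵥ C *ᵥ zvec lam (fun i j => V j i) X i) := by
    rw [← single_one_dotProduct_mulVec_single_one (Vᵀ * (Xᵀ * C * X) * V),
      ← mulVec_dotProduct_mulVec_eq_transpose_mul_mul,
      ← mulVec_dotProduct_mulVec_eq_transpose_mul_mul, mulVec_single_one]
    exact mulVec_dotProduct_mulVec_eq_mul_zvec (hlampos i) (fun i j => V j i) C
  simp only [mulVec_dotProduct_mulVec_eq_transpose_mul_mul, sum_sgn_dotProduct_mulVec,
    Fintype.card_fin, hdiag]
  rw [inv_mul_cancel_left₀ (by positivity)]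
  simp only [mul_assoc]

variable {V : Matrix (Fin p) (Fin p) ℝ}

theorem dotProduct_mul_transpose_mulVec (hlampos : ∀ i, 0 < lam i) (hV : Vᵀ * V = 1)
    (w : Fin n → ℝ) :
    w ⬝ᵥ (X * Xᵀ) *ᵥ w = ∑ j, lam j * (zvec lam (fun i j => V j i) X j ⬝ᵥ w) ^ 2 := by
  have hXX : X * Xᵀ = X * V * (X * V)ᵀ := by
    rw [transpose_mul, Matrix.mul_assoc, ← Matrix.mul_assoc V, mul_eq_one_comm.mp hV,
      Matrix.one_mul]
  have hentry (j : Fin p) :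
      ((X * V)ᵀ *ᵥ w) j = √(lam j) * (zvec lam (fun i j => V j i) X j ⬝ᵥ w) := by
    rw [mulVec_transpose, ← dotProduct_single_one (w ᵥ* (X * V)), ← dotProduct_mulVec,
      ← mulVec_mulVec, mulVec_single_one, dotProduct_comm, ← smul_eq_mul, ← smul_dotProduct]
    exact congrArg (· ⬝ᵥ w) (sqrt_smul_zvec (hlampos j) _).symm
  have hgram := mulVec_dotProduct_mulVec_eq_transpose_mul_mul (X * V)ᵀ 1 w
  rw [one_mulVec, Matrix.mul_one, transpose_transpose] at hgram
  rw [hXX, ← hgram, dotProduct]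
  refine Finset.sum_congr rfl fun j _ => ?_
  rw [hentry, ← sq, mul_pow, Real.sq_sqrt (hlampos j).le]

theorem mul_sq_dotProduct_zvec_le (hlampos : ∀ i, 0 < lam i) (hV : Vᵀ * V = 1)
    (i : Fin p) (w : Fin n → ℝ) :
    lam i * (zvec lam (fun i j => V j i) X i ⬝ᵥ w) ^ 2 ≤ w ⬝ᵥ (X * Xᵀ) *ᵥ w := by
  rw [dotProduct_mul_transpose_mulVec hlampos hV]
  exact Finset.single_le_sum
    (f := fun j => lam j * (zvec lam (fun i j => V j i) X j ⬝ᵥ w) ^ 2)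
    (fun j _ => mul_nonneg (hlampos j).le (sq_nonneg _)) (Finset.mem_univ i)

theorem posSemidef_Ami (hlampos : ∀ i, 0 < lam i) (hV : Vᵀ * V = 1) (i : Fin p) :
    (Ami lam (fun i j => V j i) X i).PosSemidef := by
  refine .of_dotProduct_mulVec_nonneg ?_ fun x => ?_
  · rw [isHermitian_iff_isSymm]
    exact (isSymm_mul_transpose X).sub ((IsSymm.ext fun a b => by
      simp [vecMulVec_apply, mul_comm]).smul _)
  · have hz := mul_sq_dotProduct_zvec_le (X := X) hlampos hV i x
    rw [star_trivial, Ami, sub_mulVec, dotProduct_sub, smul_mulVec, dotProduct_smul,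
      dotProduct_mulVec x (vecMulVec _ _), vecMul_vecMulVec, smul_dotProduct, smul_eq_mul,
      smul_eq_mul, dotProduct_comm x (zvec _ _ _ _)]
    nlinarith

theorem sq_mul_sq_dotProduct_mulVec_le (hlampos : ∀ i, 0 < lam i) (hV : Vᵀ * V = 1)
    {M : Matrix (Fin n) (Fin n) ℝ} (hM : M.IsSymm) (i : Fin p) :
    lam i ^ 2 * (zvec lam (fun i j => V j i) X i ⬝ᵥ M *ᵥ zvec lam (fun i j => V j i) X i) ^ 2 ≤
      lam i * (zvec lam (fun i j => V j i) X i ⬝ᵥ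
        (M * (X * Xᵀ) * M) *ᵥ zvec lam (fun i j => V j i) X i) := by
  rw [dotProduct_mul_mul_mulVec_of_isSymm hM, pow_two (lam i), mul_assoc]
  exact mul_le_mul_of_nonneg_left (mul_sq_dotProduct_zvec_le hlampos hV i _) (hlampos i).le

theorem mul_dotProduct_inv_addReg_mulVec_zvec {lamreg : ℝ} (hlam : 0 < lamreg)
    (hlampos : ∀ i, 0 < lam i) (hV : Vᵀ * V = 1) (i : Fin p) :
    lam i * (zvec lam (fun i j => V j i) X i ⬝ᵥ
        (addReg lamreg (X * Xᵀ))⁻¹ *ᵥ zvec lam (fun i j => V j i) X i) =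
      lam i * (zvec lam (fun i j => V j i) X i ⬝ᵥ
          (addReg lamreg (Ami lam (fun i j => V j i) X i))⁻¹ *ᵥ
            zvec lam (fun i j => V j i) X i) /
        (1 + lam i * (zvec lam (fun i j => V j i) X i ⬝ᵥ
          (addReg lamreg (Ami lam (fun i j => V j i) X i))⁻¹ *ᵥ
            zvec lam (fun i j => V j i) X i)) := by
  set z := zvec lam (fun i j => V j i) X i
  set B := addReg lamreg (Ami lam (fun i j => V j i) X i) with hB
  have hsplit : addReg lamreg (X * Xᵀ) = B + vecMulVec (lam i • z) z := by
    rw [hB, smul_vecMulVec]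
    unfold addReg Ami
    abel
  have hXX : IsUnit (addReg lamreg (X * Xᵀ)) := by
    refine isUnit_addReg ?_ hlam
    simpa only [conjTranspose_eq_transpose_of_trivial] using
      posSemidef_self_mul_conjTranspose X
  have h := dotProduct_inv_add_vecMulVec_mulVec
    (isUnit_addReg (posSemidef_Ami hlampos hV i) hlam) (hsplit ▸ hXX)
  simp only [mulVec_smul, dotProduct_smul, smul_eq_mul] at h
  rw [hsplit, h]

end Spectral

/-- lower bound for the bias part of the squared parameter norm under
random signs: with `M = (XXᵀ + nλI)⁻¹` and `θ = V(s ⊙ t)` for independent uniform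
signs, `E_s[θᵀXᵀM (XXᵀ) M X θ] = Σᵢ tᵢ² λᵢ zᵢᵀ M (XXᵀ) M zᵢ
  ≥ Σᵢ tᵢ² λᵢ² (zᵢᵀMzᵢ)² = Σᵢ tᵢ² (λᵢ zᵢᵀ(A₋ᵢ+nλI)⁻¹zᵢ/(1 + λᵢ zᵢᵀ(A₋ᵢ+nλI)⁻¹zᵢ))²`. -/
theorem statement18 (lamreg : ℝ) (hlam : 0 < lamreg)
    (lam : Fin p → ℝ) (hlampos : ∀ i, 0 < lam i)
    (V : Matrix (Fin p) (Fin p) ℝ) (hV : Vᵀ * V = 1)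
    (X : Matrix (Fin n) (Fin p) ℝ) (t : Fin p → ℝ) :
    (fun (v : Fin p → Fin p → ℝ) (Mreg : Matrix (Fin n) (Fin n) ℝ)
        (z : Fin p → Fin n → ℝ) =>
      (((2 : ℝ) ^ p)⁻¹ *
          (∑ sb : Fin p → Bool,
            (X.mulVec (V.mulVec (fun j => sgn (sb j) * t j))) ⬝ᵥ
              (Mreg * (X * Xᵀ) * Mreg).mulVec
                (X.mulVec (V.mulVec (fun j => sgn (sb j) * t j)))) =
        (∑ i : Fin p, t i ^ 2 * lam i *
          (z i ⬝ᵥ (Mreg * (X * Xᵀ) * Mreg).mulVec (z i)))) ∧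
      ((∑ i : Fin p, t i ^ 2 * lam i ^ 2 * (z i ⬝ᵥ Mreg.mulVec (z i)) ^ 2) ≤
        (∑ i : Fin p, t i ^ 2 * lam i *
          (z i ⬝ᵥ (Mreg * (X * Xᵀ) * Mreg).mulVec (z i)))) ∧
      ((∑ i : Fin p, t i ^ 2 * lam i ^ 2 * (z i ⬝ᵥ Mreg.mulVec (z i)) ^ 2) =
        (∑ i : Fin p, t i ^ 2 *
          (lam i * (z i ⬝ᵥ (addReg lamreg (Ami lam v X i))⁻¹.mulVec (z i)) /
            (1 + lam i * (z i ⬝ᵥ (addReg lamreg (Ami lam v X i))⁻¹.mulVec (z i)))) ^ 2)))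
      (fun i j => V j i)
      ((addReg lamreg (X * Xᵀ))⁻¹)
      (zvec lam (fun i j => V j i) X) := by
  have hM : ((addReg lamreg (X * Xᵀ))⁻¹).IsSymm :=
    (isSymm_addReg (isSymm_mul_transpose X) lamreg).inv
  refine ⟨inv_two_pow_mul_sum_sgn_quadForm hlampos V t _,
    Finset.sum_le_sum fun i _ => ?_, Finset.sum_congr rfl fun i _ => ?_⟩
  · simpa only [mul_assoc] using
      mul_le_mul_of_nonneg_left (sq_mul_sq_dotProduct_mulVec_le hlampos hV hM i) (sq_nonneg (t i))
  · rw [← mul_dotProduct_inv_addReg_mulVec_zvec hlam hlampos hV i]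
    ring

end
end
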